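/- Let n ≥ 1 and R = ℂ[x_0,…,x_n]. Let A = {x_i − x_j : 0 ≤ i < j ≤ n} be the braid arrangement of the symmetric group A_n. Then the singular-locus ideal J(A) equals the ideal generated by the n+1 polynomials g_s = ∏_{0≤i<j≤n, i≠s, j≠s} (x_i − x_j) for 0 ≤ s ≤ n, and this ideal also equals the ideal generated by all n×n minors of the (n+1)×n truncated Vandermonde matrix M whose (i,j)-entry is x_i^j for 0 ≤ i ≤ n and 0 ≤ j ≤ n−1. -/

import Mathlib

open MvPolynomial

/-- The singular-locus ideal of a hyperplane arrangement given by a set `A` of linear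
forms: the intersection over all unordered pairs of distinct forms of the ideals
generated by the two forms (the empty intersection being the unit ideal). -/
noncomputable def singIdeal {R : Type*} [CommRing R] (A : Set R) : Ideal R :=
  ⨅ (ℓ : R) (_ : ℓ ∈ A) (ℓ' : R) (_ : ℓ' ∈ A) (_ : ℓ ≠ ℓ'), Ideal.span {ℓ, ℓ'}

/-!
Each `g_s = ∏_{i<j; i,j ≠ s} (x_i - x_j)` lies in `(ℓ, ℓ')` for any two distinct forms
`ℓ = x_i - x_j`, `ℓ' = x_k - x_l`: either one of them avoids `s` and divides `g_s`, or `s` is an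
endpoint of both and the difference of the two other endpoints lies in `(ℓ, ℓ')` and divides `g_s`.

Conversely, every `f ∈ J(A)` vanishes on the points lying on two distinct hyperplanes of the
arrangement (the double locus), and over an infinite domain such polynomials lie in `(g_s)_s`,
by induction on the set of variables `S`, adjoining a new largest variable `x_μ`. Specialising `x_μ := x_t`
(`t ∈ S`) turns `f` into a multiple `Δ_S h_t` of the Vandermonde product of `S`, since the result
vanishes on every hyperplane `x_i = x_j` of `S`. Interpolating the `h_t` against the new generators
gives `A ∈ (g_s)_s` with `f - A` divisible by `π = ∏_{t ∈ S} (x_t - x_μ)`. The cofactor of `π`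
vanishes on the double locus of `S` (as a polynomial in `x_μ` it has infinitely many roots), so it
lies in the old ideal by induction, and `π` maps the old generators into the new ideal.

The Vandermonde minors are `± g_s`.
-/

open Finset

theorem Finset.prod_dvd_of_prime {M₀ ι : Type*} [CommMonoidWithZero M₀] [IsCancelMulZero M₀]
    [DecidableEq ι] {s : Finset ι} {p : ι → M₀} {n : M₀} (hp : ∀ i ∈ s, Prime (p i))
    (hinj : ∀ i ∈ s, ∀ j ∈ s, p i ∣ p j → i = j) (hdvd : ∀ i ∈ s, p i ∣ n) :
    ∏ i ∈ s, p i ∣ n := by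
  induction s using Finset.induction_on generalizing n with
  | empty => simp
  | insert i s hi ih =>
    rw [prod_insert hi]
    obtain ⟨k, rfl⟩ := hdvd i (mem_insert_self i s)
    refine mul_dvd_mul_left _ (ih (fun j hj => hp j (mem_insert_of_mem hj))
      (fun j hj j' hj' => hinj j (mem_insert_of_mem hj) j' (mem_insert_of_mem hj')) fun j hj => ?_)
    refine ((hp j (mem_insert_of_mem hj)).dvd_or_dvd (hdvd j (mem_insert_of_mem hj))).resolve_left
      fun h => hi ?_
    rwa [← hinj j (mem_insert_of_mem hj) i (mem_insert_self i s) h]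

theorem Ideal.span_range_eq_of_associated {R ι : Type*} [CommSemiring R] {f g : ι → R}
    (h : ∀ i, Associated (f i) (g i)) :
    Ideal.span (Set.range f) = Ideal.span (Set.range g) := by
  apply le_antisymm <;> rw [Ideal.span_le] <;> rintro _ ⟨i, rfl⟩
  · exact Ideal.mem_of_dvd _ (h i).symm.dvd (Ideal.subset_span ⟨i, rfl⟩)
  · exact Ideal.mem_of_dvd _ (h i).dvd (Ideal.subset_span ⟨i, rfl⟩)

theorem Matrix.associated_det_vandermonde {A : Type*} [CommRing A] {n : ℕ} (v : Fin n → A) :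
    Associated (Matrix.vandermonde v).det (∏ i, ∏ j with i < j, (v i - v j)) := by
  rw [Matrix.det_vandermonde]
  refine Associated.prod _ _ _ fun i _ => ?_
  rw [← filter_lt_eq_Ioi]
  exact Associated.prod _ _ _ fun j _ => by rw [← neg_sub]; exact (Associated.refl _).neg_left

namespace MvPolynomial

noncomputable section

variable {σ R : Type*}

theorem eval_eq_zero_of_eval_update_eq_zero [CommRing R] [IsDomain R] [Infinite R]
    [DecidableEq σ] {f : MvPolynomial σ R} {a : σ → R} {μ : σ} (Z : Finset R)
    (h : ∀ c ∉ Z, eval (Function.update a μ c) f = 0) : eval a f = 0 := by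
  -- `f` as a polynomial in `x μ`, the other variables specialised to `a`
  have hp : ∀ c, (aeval (Function.update (Polynomial.C ∘ a) μ Polynomial.X) f).eval c =
      eval (Function.update a μ c) f := by
    intro c
    rw [aeval_def, ← Polynomial.coe_evalRingHom, eval₂_comp_left]
    congr
    · ext; simp
    · ext u; by_cases hu : u = μ <;> simp [hu]
  have := Polynomial.eq_zero_of_infinite_isRoot _ <|
    Z.finite_toSet.infinite_compl.mono fun c hc => (hp c).trans (h c hc)
  simpa [this] using (hp (a μ)).symm

section Substitution

variable [CommRing R] [DecidableEq σ]

theorem X_sub_X_dvd_sub_rename_update (i j : σ) (f : MvPolynomial σ R) :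
    X i - X j ∣ f - rename (Function.update id j i) f := by
  rw [← Ideal.mem_span_singleton, ← Ideal.Quotient.eq]
  have : (Ideal.Quotient.mkₐ R (Ideal.span {X i - X j})).comp (rename (Function.update id j i)) =
      Ideal.Quotient.mkₐ R _ := by
    ext u
    by_cases hu : u = j
    · subst hu
      simpa using (Ideal.Quotient.eq.2 (Ideal.mem_span_singleton_self _))
    · simp [hu]
  exact (DFunLike.congr_fun this f).symm

theorem ker_rename_update (i j : σ) :
    RingHom.ker (rename (R := R) (Function.update id j i)) = Ideal.span {X i - X j} := by
  apply le_antisymm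
  · intro f hf
    simpa [Ideal.mem_span_singleton, (RingHom.mem_ker).1 hf] using
      X_sub_X_dvd_sub_rename_update i j f
  · rw [Ideal.span_le, Set.singleton_subset_iff]
    by_cases h : i = j
    · simp [h]
    · simp [RingHom.mem_ker, Function.update_of_ne h]

theorem prime_X_sub_X [IsDomain R] {i j : σ} (h : i ≠ j) :
    Prime (X i - X j : MvPolynomial σ R) := by
  rw [← Ideal.span_singleton_prime (sub_ne_zero.2 (X_injective.ne h)), ← ker_rename_update]
  exact RingHom.ker_isPrime _

theorem X_sub_X_dvd_of_eval_eq_zero [IsDomain R] [Infinite R] {i j : σ} {f : MvPolynomial σ R}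
    (h : ∀ a : σ → R, a i = a j → eval a f = 0) : X i - X j ∣ f := by
  rw [← Ideal.mem_span_singleton, ← ker_rename_update, RingHom.mem_ker]
  refine MvPolynomial.funext fun a => ?_
  rw [eval_rename, map_zero]
  apply h
  by_cases hij : i = j <;> simp [hij, Function.update_of_ne]

end Substitution

section Vandermonde

variable [CommRing R] [LinearOrder σ]

theorem eq_of_X_sub_X_dvd [Nontrivial R] {i j k l : σ} (hij : i < j) (hkl : k < l)
    (h : (X i - X j : MvPolynomial σ R) ∣ X k - X l) : (i, j) = (k, l) := by
  rw [← Ideal.mem_span_singleton, ← ker_rename_update, RingHom.mem_ker, map_sub, rename_X,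
    rename_X, sub_eq_zero] at h
  have h := X_injective h
  simp only [Function.update_apply, id] at h
  split_ifs at h <;> grind

def vandermondePoly (S : Finset σ) : MvPolynomial σ R :=
  ∏ i ∈ S, ∏ j ∈ S with i < j, (X i - X j)

theorem vandermondePoly_eq_prod_filter (S : Finset σ) :
    (vandermondePoly S : MvPolynomial σ R) = ∏ p ∈ S ×ˢ S with p.1 < p.2, (X p.1 - X p.2) := by
  rw [prod_filter, prod_product, vandermondePoly]
  simp_rw [prod_filter]

theorem X_sub_X_dvd_vandermondePoly {S : Finset σ} {i j : σ} (hi : i ∈ S) (hj : j ∈ S)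
    (hij : i < j) : (X i - X j : MvPolynomial σ R) ∣ vandermondePoly S := by
  have hj' : j ∈ {j ∈ S | i < j} := mem_filter.2 ⟨hj, hij⟩
  exact (dvd_prod_of_mem (fun j => X i - X j) hj').trans
    (dvd_prod_of_mem (fun i => ∏ j ∈ S with i < j, (X i - X j)) hi)

theorem vandermondePoly_mem_of_X_sub_X_mem {I : Ideal (MvPolynomial σ R)} {S : Finset σ}
    {u v : σ} (hu : u ∈ S) (hv : v ∈ S) (huv : u ≠ v) (h : X u - X v ∈ I) :
    vandermondePoly S ∈ I := by
  rcases huv.lt_or_gt with huv | hvu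
  · exact I.mem_of_dvd (X_sub_X_dvd_vandermondePoly hu hv huv) h
  · refine I.mem_of_dvd (X_sub_X_dvd_vandermondePoly hv hu hvu) ?_
    rw [← neg_sub]
    exact I.neg_mem h

theorem vandermondePoly_erase_mem {I : Ideal (MvPolynomial σ R)} {S : Finset σ} (s : σ)
    {i j k l : σ} (hi : i ∈ S) (hj : j ∈ S) (hk : k ∈ S) (hl : l ∈ S) (hij : i < j) (hkl : k < l)
    (hne : (i, j) ≠ (k, l)) (h₁ : X i - X j ∈ I) (h₂ : X k - X l ∈ I) :
    vandermondePoly (S.erase s) ∈ I := by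
  by_cases hs₁ : s ≠ i ∧ s ≠ j
  · exact vandermondePoly_mem_of_X_sub_X_mem (mem_erase.2 ⟨hs₁.1.symm, hi⟩)
      (mem_erase.2 ⟨hs₁.2.symm, hj⟩) hij.ne h₁
  by_cases hs₂ : s ≠ k ∧ s ≠ l
  · exact vandermondePoly_mem_of_X_sub_X_mem (mem_erase.2 ⟨hs₂.1.symm, hk⟩)
      (mem_erase.2 ⟨hs₂.2.symm, hl⟩) hkl.ne h₂
  -- `s` is an endpoint of both pairs: the two other endpoints are congruent modulo `I`
  rw [not_and_or, not_ne_iff, not_ne_iff] at hs₁ hs₂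
  rcases hs₁ with rfl | rfl <;> rcases hs₂ with rfl | rfl
  · refine vandermondePoly_mem_of_X_sub_X_mem (mem_erase.2 ⟨hij.ne', hj⟩)
      (mem_erase.2 ⟨hkl.ne', hl⟩) (fun h => hne (by rw [h])) ?_
    simpa using I.sub_mem h₂ h₁
  · refine vandermondePoly_mem_of_X_sub_X_mem (mem_erase.2 ⟨hkl.ne, hk⟩)
      (mem_erase.2 ⟨hij.ne', hj⟩) (hkl.trans hij).ne ?_
    simpa using I.add_mem h₂ h₁
  · refine vandermondePoly_mem_of_X_sub_X_mem (mem_erase.2 ⟨hij.ne, hi⟩)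
      (mem_erase.2 ⟨hkl.ne', hl⟩) (hij.trans hkl).ne ?_
    simpa using I.add_mem h₁ h₂
  · refine vandermondePoly_mem_of_X_sub_X_mem (mem_erase.2 ⟨hij.ne, hi⟩)
      (mem_erase.2 ⟨hkl.ne, hk⟩) (fun h => hne (by rw [h])) ?_
    simpa using I.sub_mem h₁ h₂

theorem vandermondePoly_insert {S : Finset σ} {t : σ} (ht : t ∉ S) :
    (vandermondePoly (insert t S) : MvPolynomial σ R) =
      (-1) ^ #{v ∈ S | t < v} * vandermondePoly S * ∏ v ∈ S, (X v - X t) := by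
  have hrow : ∀ i ∈ S, ∏ j ∈ insert t S with i < j, (X i - X j : MvPolynomial σ R) =
      (if i < t then X i - X t else 1) * ∏ j ∈ S with i < j, (X i - X j) := by
    intro i _
    rw [filter_insert]
    split_ifs
    · exact prod_insert fun h => ht (mem_filter.1 h).1
    · rw [one_mul]
  have hsplit : {v ∈ S | ¬v < t} = {v ∈ S | t < v} :=
    filter_congr fun v hv => by simp [lt_iff_le_and_ne, ne_of_mem_of_not_mem hv ht]
  rw [vandermondePoly, prod_insert ht, filter_insert, if_neg (lt_irrefl t), prod_congr rfl hrow,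
    prod_mul_distrib, ← vandermondePoly, prod_ite, prod_const_one, mul_one,
    ← prod_filter_mul_prod_filter_not S (· < t), hsplit]
  have hneg : ∏ j ∈ S with t < j, (X t - X j : MvPolynomial σ R) =
      (-1) ^ #{v ∈ S | t < v} * ∏ j ∈ S with t < j, (X j - X t) := by
    rw [← prod_neg]
    simp_rw [neg_sub]
  rw [hneg]
  ring

theorem vandermondePoly_insert_of_forall_lt {S : Finset σ} {t : σ} (ht : ∀ v ∈ S, v < t) :
    (vandermondePoly (insert t S) : MvPolynomial σ R) =
      vandermondePoly S * ∏ v ∈ S, (X v - X t) := by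
  rw [vandermondePoly_insert fun h => (ht t h).false,
    filter_false_of_mem fun v hv => (ht v hv).asymm, card_empty, pow_zero, one_mul]

theorem rename_vandermondePoly {S : Finset σ} {g : σ → σ} (hg : ∀ v ∈ S, g v = v) :
    rename g (vandermondePoly S : MvPolynomial σ R) = vandermondePoly S := by
  simp only [vandermondePoly, map_prod, map_sub, rename_X]
  refine prod_congr rfl fun i hi => prod_congr rfl fun j hj => ?_
  rw [hg i hi, hg j (mem_filter.1 hj).1]

theorem vandermondePoly_dvd [IsDomain R] {S : Finset σ} {f : MvPolynomial σ R}
    (h : ∀ i ∈ S, ∀ j ∈ S, i < j → X i - X j ∣ f) : vandermondePoly S ∣ f := by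
  rw [vandermondePoly_eq_prod_filter]
  refine prod_dvd_of_prime (fun p hp => prime_X_sub_X (mem_filter.1 hp).2.ne)
    (fun p hp q hq hpq => ?_) fun p hp => ?_
  · simpa using eq_of_X_sub_X_dvd (mem_filter.1 hp).2 (mem_filter.1 hq).2 hpq
  · obtain ⟨hS, hp⟩ := mem_filter.1 hp
    exact h _ (mem_product.1 hS).1 _ (mem_product.1 hS).2 hp

theorem vandermondePoly_map {τ : Type*} [LinearOrder τ] (e : σ ↪o τ) (S : Finset σ) :
    (vandermondePoly (S.map e.toEmbedding) : MvPolynomial τ R) =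
      ∏ i ∈ S, ∏ j ∈ S with i < j, (X (e i) - X (e j)) := by
  simp [vandermondePoly, filter_map]

theorem prod_filter_ne_eq_vandermondePoly_erase [Fintype σ] (s : σ) :
    ∏ p ∈ univ.filter (fun p : σ × σ => p.1 < p.2 ∧ p.1 ≠ s ∧ p.2 ≠ s), (X p.1 - X p.2) =
      (vandermondePoly (univ.erase s) : MvPolynomial σ R) := by
  rw [vandermondePoly_eq_prod_filter]
  congr 1
  ext p
  simp only [mem_filter, mem_univ, mem_product, mem_erase, true_and]
  tauto

end Vandermonde

section BraidArrangement

variable [LinearOrder σ]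

/-- The double locus of the braid arrangement on `S`. -/
def doubleDiagonal (S : Finset σ) : Set (σ → R) :=
  {a | ∃ i ∈ S, ∃ j ∈ S, ∃ k ∈ S, ∃ l ∈ S,
    i < j ∧ k < l ∧ (i, j) ≠ (k, l) ∧ a i = a j ∧ a k = a l}

theorem mem_doubleDiagonal_of_eqOn {S T : Finset σ} {a b : σ → R} (hST : S ⊆ T)
    (hab : ∀ v ∈ S, a v = b v) (ha : a ∈ doubleDiagonal S) : b ∈ doubleDiagonal T := by
  obtain ⟨i, hi, j, hj, k, hk, l, hl, hij, hkl, hne, h₁, h₂⟩ := ha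
  refine ⟨i, hST hi, j, hST hj, k, hST hk, l, hST hl, hij, hkl, hne, ?_, ?_⟩
  · rw [← hab i hi, ← hab j hj, h₁]
  · rw [← hab k hk, ← hab l hl, h₂]

variable [CommRing R]

theorem eval_eq_zero_of_mem_span_vandermondePoly_erase {S : Finset σ} {f : MvPolynomial σ R}
    (hf : f ∈ Ideal.span ((fun t => vandermondePoly (S.erase t)) '' S)) {a : σ → R}
    (ha : a ∈ doubleDiagonal S) : eval a f = 0 := by
  obtain ⟨i, hi, j, hj, k, hk, l, hl, hij, hkl, hne, h₁, h₂⟩ := ha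
  refine (RingHom.mem_ker).1 <| (Ideal.span_le.2 ?_) hf
  rintro _ ⟨t, -, rfl⟩
  exact vandermondePoly_erase_mem t hi hj hk hl hij hkl hne (by simp [h₁]) (by simp [h₂])

variable {S : Finset σ} {μ : σ}

theorem rename_update_vandermondePoly_insert_erase (hμ : ∀ v ∈ S, v < μ) {t : σ}
    (ht : t ∈ S) :
    rename (Function.update id μ t) (vandermondePoly ((insert μ S).erase t) : MvPolynomial σ R) =
      vandermondePoly (S.erase t) * ∏ v ∈ S.erase t, (X v - X t) := by
  rw [erase_insert_of_ne (hμ t ht).ne',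
    vandermondePoly_insert_of_forall_lt fun v hv => hμ v (mem_of_mem_erase hv), map_mul,
    rename_vandermondePoly fun v hv => Function.update_of_ne (hμ v (mem_of_mem_erase hv)).ne _ _,
    map_prod]
  refine congrArg _ (prod_congr rfl fun v hv => ?_)
  rw [map_sub, rename_X, rename_X, Function.update_self,
    Function.update_of_ne (hμ v (mem_of_mem_erase hv)).ne, id]

theorem rename_update_vandermondePoly_insert_erase_of_ne (hμ : ∀ v ∈ S, v < μ) {t u : σ}
    (ht : t ∈ S) (hu : u ∈ S) (htu : t ≠ u) :
    rename (Function.update id μ t) (vandermondePoly ((insert μ S).erase u) : MvPolynomial σ R) =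
      0 := by
  obtain ⟨c, hc⟩ := X_sub_X_dvd_vandermondePoly (R := R)
    (mem_erase.2 ⟨htu, mem_insert_of_mem ht⟩) (mem_erase.2 ⟨(hμ u hu).ne', mem_insert_self μ S⟩)
    (hμ t ht)
  simp [hc, Function.update_of_ne (hμ t ht).ne]

theorem prod_X_sub_X_mul_mem_span (hμ : ∀ v ∈ S, v < μ) {B : MvPolynomial σ R}
    (hB : B ∈ Ideal.span ((fun t => vandermondePoly (S.erase t)) '' S)) :
    (∏ t ∈ S, (X t - X μ)) * B ∈
      Ideal.span ((fun t => vandermondePoly ((insert μ S).erase t)) '' ↑(insert μ S)) := by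
  rw [mul_comm, ← smul_eq_mul, ← Submodule.mem_colon_singleton]
  refine (Ideal.span_le.2 ?_) hB
  rintro _ ⟨t, ht, rfl⟩
  rw [SetLike.mem_coe, Submodule.mem_colon_singleton, smul_eq_mul]
  have h : vandermondePoly (S.erase t) * ∏ v ∈ S, (X v - X μ) =
      (vandermondePoly ((insert μ S).erase t) : MvPolynomial σ R) * (X t - X μ) := by
    rw [erase_insert_of_ne (hμ t ht).ne',
      vandermondePoly_insert_of_forall_lt fun v hv => hμ v (mem_of_mem_erase hv),
      ← mul_prod_erase S _ ht]
    ring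
  rw [h]
  exact Ideal.mul_mem_right _ _ (Ideal.subset_span ⟨t, mem_insert_of_mem ht, rfl⟩)

variable [IsDomain R] [Infinite R]

theorem exists_rename_update_eq_vandermondePoly_mul (hμ : ∀ v ∈ S, v < μ) {t : σ} (ht : t ∈ S)
    {f : MvPolynomial σ R} (hf : ∀ a ∈ doubleDiagonal (insert μ S), eval a f = 0) :
    ∃ H : MvPolynomial σ R, rename (Function.update id μ t) f = vandermondePoly S * H ∧
      rename (Function.update id μ t) H = H := by
  have hρρ : ∀ g : MvPolynomial σ R,
      rename (Function.update id μ t) (rename (Function.update id μ t) g) =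
        rename (Function.update id μ t) g := by
    intro g
    rw [rename_rename]
    congr 1
    ext v
    by_cases hv : v = μ <;> simp [hv, Function.update_of_ne (hμ t ht).ne]
  have hdvd : vandermondePoly S ∣ rename (Function.update id μ t) f := by
    refine vandermondePoly_dvd fun i hi j hj hij => X_sub_X_dvd_of_eval_eq_zero fun a ha => ?_
    rw [eval_rename, Function.comp_update, Function.comp_id]
    refine hf _ ⟨i, mem_insert_of_mem hi, j, mem_insert_of_mem hj, t, mem_insert_of_mem ht, μ,
      mem_insert_self μ S, hij, hμ t ht, fun h => (hμ j hj).ne (Prod.ext_iff.1 h).2, ?_, ?_⟩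
    · rwa [Function.update_of_ne (hμ i hi).ne, Function.update_of_ne (hμ j hj).ne]
    · rw [Function.update_self, Function.update_of_ne (hμ t ht).ne]
  obtain ⟨H, hH⟩ := hdvd
  refine ⟨rename (Function.update id μ t) H, ?_, hρρ H⟩
  rw [← hρρ f, hH, map_mul,
    rename_vandermondePoly fun v hv => Function.update_of_ne (hμ v hv).ne _ _]

theorem exists_mem_span_prod_X_sub_X_dvd_sub (hμ : ∀ v ∈ S, v < μ) {f : MvPolynomial σ R}
    (hf : ∀ a ∈ doubleDiagonal (insert μ S), eval a f = 0) :
    ∃ A ∈ Ideal.span ((fun t => vandermondePoly ((insert μ S).erase t)) '' ↑(insert μ S)),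
      ∏ t ∈ S, (X t - X μ) ∣ f - A := by
  choose! H hH hHfix using fun t (ht : t ∈ S) =>
    exists_rename_update_eq_vandermondePoly_mul hμ ht hf
  -- On the hyperplane `x μ = x t` every summand but the `t`-th vanishes, and the sign makes
  -- the `t`-th one equal to `Δ_S H t`.
  refine ⟨∑ t ∈ S, (-1) ^ #{v ∈ S.erase t | t < v} * H t *
      vandermondePoly ((insert μ S).erase t), ?_, ?_⟩
  · exact Ideal.sum_mem _ fun t ht =>
      Ideal.mul_mem_left _ _ (Ideal.subset_span ⟨t, mem_insert_of_mem ht, rfl⟩)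
  refine prod_dvd_of_prime (fun t ht => prime_X_sub_X (hμ t ht).ne) (fun t ht u hu h => ?_)
    fun t ht => ?_
  · simpa using eq_of_X_sub_X_dvd (hμ t ht) (hμ u hu) h
  rw [← Ideal.mem_span_singleton, ← ker_rename_update, RingHom.mem_ker, map_sub, map_sum,
    sum_eq_single t (fun u hu hut => by
      rw [map_mul, rename_update_vandermondePoly_insert_erase_of_ne hμ ht hu (Ne.symm hut),
        mul_zero]) (fun h => (h ht).elim),
    map_mul, map_mul, rename_update_vandermondePoly_insert_erase hμ ht, hHfix t ht, hH t ht]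
  have hS := vandermondePoly_insert (R := R) (notMem_erase t S)
  rw [insert_erase ht] at hS
  rw [hS, map_pow, map_neg, map_one]
  ring

theorem eval_eq_zero_of_eval_prod_X_sub_X_mul_eq_zero (hμ : μ ∉ S) {B : MvPolynomial σ R}
    (hB : ∀ a ∈ doubleDiagonal (insert μ S), eval a ((∏ t ∈ S, (X t - X μ)) * B) = 0)
    {a : σ → R} (ha : a ∈ doubleDiagonal S) : eval a B = 0 := by
  classical
  refine eval_eq_zero_of_eval_update_eq_zero (μ := μ) (S.image a) fun c hc => ?_
  have hne : ∀ v ∈ S, v ≠ μ := fun v hv => ne_of_mem_of_not_mem hv hμ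
  have hmem : Function.update a μ c ∈ doubleDiagonal (insert μ S) :=
    mem_doubleDiagonal_of_eqOn (subset_insert μ S)
      (fun v hv => (Function.update_of_ne (hne v hv) _ _).symm) ha
  have hπ : eval (Function.update a μ c) (∏ t ∈ S, (X t - X μ)) ≠ 0 := by
    rw [map_prod]
    refine prod_ne_zero_iff.2 fun t ht => ?_
    rw [map_sub, eval_X, eval_X, Function.update_self, Function.update_of_ne (hne t ht),
      sub_ne_zero]
    exact fun h => hc (mem_image.2 ⟨t, ht, h⟩)
  have := hB _ hmem
  rw [map_mul] at this
  exact (mul_eq_zero.1 this).resolve_left hπ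

theorem mem_span_vandermondePoly_erase_insert (hμ : ∀ v ∈ S, v < μ)
    (ih : ∀ B : MvPolynomial σ R, (∀ a ∈ doubleDiagonal S, eval a B = 0) →
      B ∈ Ideal.span ((fun t => vandermondePoly (S.erase t)) '' S))
    {f : MvPolynomial σ R} (hf : ∀ a ∈ doubleDiagonal (insert μ S), eval a f = 0) :
    f ∈ Ideal.span ((fun t => vandermondePoly ((insert μ S).erase t)) '' ↑(insert μ S)) := by
  obtain ⟨A, hA, B, hB⟩ := exists_mem_span_prod_X_sub_X_dvd_sub hμ hf
  have hπB : ∀ a ∈ doubleDiagonal (insert μ S), eval a ((∏ t ∈ S, (X t - X μ)) * B) = 0 := by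
    intro a ha
    rw [← hB, map_sub, hf a ha, eval_eq_zero_of_mem_span_vandermondePoly_erase hA ha, sub_zero]
  have hB' := prod_X_sub_X_mul_mem_span hμ
    (ih B fun a => eval_eq_zero_of_eval_prod_X_sub_X_mul_eq_zero (fun h => (hμ μ h).false) hπB)
  rw [← hB] at hB'
  simpa using add_mem hA hB'

theorem mem_span_vandermondePoly_erase_iff {S : Finset σ} (hS : S.Nonempty)
    {f : MvPolynomial σ R} :
    f ∈ Ideal.span ((fun t => vandermondePoly (S.erase t)) '' S) ↔
      ∀ a ∈ doubleDiagonal S, eval a f = 0 := by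
  refine ⟨fun hf a => eval_eq_zero_of_mem_span_vandermondePoly_erase hf, fun hf => ?_⟩
  induction S using Finset.induction_on_max generalizing f with
  | empty => exact absurd hS not_nonempty_empty
  | insert μ S hμ ih =>
    rcases S.eq_empty_or_nonempty with rfl | hS
    · refine Ideal.mem_of_dvd _ (one_dvd f) (Ideal.subset_span ⟨μ, mem_singleton_self μ, ?_⟩)
      simp [vandermondePoly]
    · exact mem_span_vandermondePoly_erase_insert hμ (fun B hB => ih hS hB) hf

end BraidArrangement

end

end MvPolynomial

theorem mem_singIdeal {R : Type*} [CommRing R] {A : Set R} {f : R} :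
    f ∈ singIdeal A ↔ ∀ ℓ ∈ A, ∀ ℓ' ∈ A, ℓ ≠ ℓ' → f ∈ Ideal.span {ℓ, ℓ'} := by
  simp [singIdeal]

theorem singIdeal_braidArrangement {σ R : Type*} [LinearOrder σ] [Fintype σ] [Nonempty σ]
    [CommRing R] [IsDomain R] [Infinite R] :
    singIdeal {f : MvPolynomial σ R | ∃ i j, i < j ∧ f = X i - X j} =
      Ideal.span (Set.range fun s => vandermondePoly (univ.erase s)) := by
  rw [← Set.image_univ, ← coe_univ]
  apply le_antisymm
  · intro f hf
    rw [mem_span_vandermondePoly_erase_iff univ_nonempty]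
    rintro a ⟨i, -, j, -, k, -, l, -, hij, hkl, hne, h₁, h₂⟩
    have hf := mem_singIdeal.1 hf _ ⟨i, j, hij, rfl⟩ _ ⟨k, l, hkl, rfl⟩ fun h =>
      hne (eq_of_X_sub_X_dvd hij hkl (dvd_of_eq h))
    refine (RingHom.mem_ker).1 ((Ideal.span_le.2 ?_) hf)
    simp [Set.pair_subset_iff, h₁, h₂]
  · rw [Ideal.span_le]
    rintro _ ⟨s, -, rfl⟩
    rw [SetLike.mem_coe, mem_singIdeal]
    rintro _ ⟨i, j, hij, rfl⟩ _ ⟨k, l, hkl, rfl⟩ hne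
    exact vandermondePoly_erase_mem s (mem_univ i) (mem_univ j) (mem_univ k) (mem_univ l) hij
      hkl (fun h => hne (by cases h; rfl)) (Ideal.subset_span (by simp))
      (Ideal.subset_span (by simp))

theorem Fin.univ_map_succAboveOrderEmb {n : ℕ} (s : Fin (n + 1)) :
    univ.map (Fin.succAboveOrderEmb s).toEmbedding = univ.erase s := by
  rw [← coe_inj, coe_map, coe_univ, Set.image_univ, coe_erase, coe_univ,
    ← Set.compl_eq_univ_sdiff]
  exact Fin.range_succAboveOrderEmb s

theorem MvPolynomial.associated_vandermondePoly_univ_erase_det {R : Type*} [CommRing R] {n : ℕ}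
    (s : Fin (n + 1)) :
    Associated (vandermondePoly (univ.erase s))
      (Matrix.vandermonde fun i => (X (s.succAbove i) : MvPolynomial (Fin (n + 1)) R)).det := by
  rw [← Fin.univ_map_succAboveOrderEmb, vandermondePoly_map]
  exact (Matrix.associated_det_vandermonde _).symm

theorem stmt0_general (n : ℕ)
    (A : Set (MvPolynomial (Fin (n + 1)) ℂ))
    (hA : A = {f | ∃ i j : Fin (n + 1), i < j ∧ f = X i - X j}) :
    singIdeal A =
      Ideal.span (Set.range fun s : Fin (n + 1) =>
        ∏ p ∈ Finset.univ.filter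
          (fun p : Fin (n + 1) × Fin (n + 1) => p.1 < p.2 ∧ p.1 ≠ s ∧ p.2 ≠ s),
          (X p.1 - X p.2)) ∧
    singIdeal A =
      Ideal.span (Set.range fun s : Fin (n + 1) =>
        Matrix.det (Matrix.of fun i j : Fin n =>
          (X (s.succAbove i) : MvPolynomial (Fin (n + 1)) ℂ) ^ (j : ℕ))) := by
  subst hA
  simp_rw [prod_filter_ne_eq_vandermondePoly_erase]
  exact ⟨singIdeal_braidArrangement, singIdeal_braidArrangement.trans
    (Ideal.span_range_eq_of_associated associated_vandermondePoly_univ_erase_det)⟩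

theorem stmt0 (n : ℕ) (hn : 1 ≤ n)
    (A : Set (MvPolynomial (Fin (n + 1)) ℂ))
    (hA : A = {f | ∃ i j : Fin (n + 1), i < j ∧ f = X i - X j}) :
    singIdeal A =
      Ideal.span (Set.range fun s : Fin (n + 1) =>
        ∏ p ∈ Finset.univ.filter
          (fun p : Fin (n + 1) × Fin (n + 1) => p.1 < p.2 ∧ p.1 ≠ s ∧ p.2 ≠ s),
          (X p.1 - X p.2)) ∧
    singIdeal A =
      Ideal.span (Set.range fun s : Fin (n + 1) =>
        Matrix.det (Matrix.of fun i j : Fin n =>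
          (X (s.succAbove i) : MvPolynomial (Fin (n + 1)) ℂ) ^ (j : ℕ))) :=
  stmt0_general n A hA
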